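/- For the posterior jump vector in the stable-Beta-Dirichlet multinomial model, with density on S_q proportional to ∏ⱼ sⱼ^{c_{j}+γⱼ-1} · s_·^{-α-∑γⱼ} (1-s_·)^{M+β+α-c-1} where c = ∑ c_j, the sum S = ∑ⱼ Jⱼ is Beta(c-α, M+β+α-c) distributed and independent of the normalized vector D = (J₁/S,...,J_q/S), which is Dirichlet(c₁+γ₁,...,c_q+γ_q) distributed. -/

import Mathlib

/-! Write `s = S • x` with `S = ∑ⱼ sⱼ` and `x` on the unit simplex; the Jacobian of
`(S, x₁, …, xₙ) ↦ s` is `Sⁿ`. Then `∏ⱼ sⱼ^(aⱼ-1) = S^(∑ aⱼ - (n+1)) ∏ⱼ xⱼ^(aⱼ-1)` and `s_· = S`,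
so all powers of `S` collect into `S^(c-α-1)`, the `x`-part is the Dirichlet kernel, and the
Gamma constants only regroup. -/

open Real

theorem Fin.sum_snoc_one_sub_sum {R : Type*} [AddCommGroup R] [One R] {n : ℕ} (d : Fin n → R) :
    ∑ j, (Fin.snoc d (1 - ∑ i, d i) : Fin (n + 1) → R) j = 1 := by
  rw [Fin.sum_snoc, add_sub_cancel]

theorem Fin.snoc_one_sub_sum_nonneg {R : Type*} [AddCommGroup R] [PartialOrder R]
    [IsOrderedAddMonoid R] [One R] {n : ℕ} {d : Fin n → R} (hd : ∀ i, 0 ≤ d i)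
    (hsum : ∑ i, d i ≤ 1) (j : Fin (n + 1)) :
    0 ≤ (Fin.snoc d (1 - ∑ i, d i) : Fin (n + 1) → R) j := by
  induction j using Fin.lastCases with
  | last => simpa only [Fin.snoc_last, sub_nonneg] using hsum
  | cast i => simpa only [Fin.snoc_castSucc] using hd i

theorem Real.prod_const_mul_rpow {ι : Type*} (s : Finset ι) {S : ℝ} (hS : 0 < S) {x : ι → ℝ}
    (hx : ∀ j, 0 ≤ x j) (a : ι → ℝ) :
    ∏ j ∈ s, (S * x j) ^ a j = S ^ (∑ j ∈ s, a j) * ∏ j ∈ s, x j ^ a j := by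
  rw [rpow_sum_of_pos hS, ← Finset.prod_mul_distrib]
  exact Finset.prod_congr rfl fun j _ => mul_rpow hS.le (hx j)

theorem Real.scale_simplex_density_factorization {n : ℕ} {S : ℝ} (hS : 0 < S)
    {x : Fin (n + 1) → ℝ} (hx : ∀ j, 0 ≤ x j) (hx1 : ∑ j, x j = 1) (a : Fin (n + 1) → ℝ) (b : ℝ) :
    S ^ n * ((∏ j, (S * x j) ^ (a j - 1)) * (∑ j, S * x j) ^ b) =
      S ^ (∑ j, a j + b - 1) * ∏ j, x j ^ (a j - 1) := by
  have hexp : ∑ j, a j + b - 1 = n + ((∑ j, (a j - 1)) + b) := by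
    simp only [Finset.sum_sub_distrib, Finset.sum_const, Finset.card_univ, Fintype.card_fin,
      nsmul_eq_mul, mul_one, Nat.cast_add, Nat.cast_one]
    ring
  rw [← Finset.mul_sum, hx1, mul_one, prod_const_mul_rpow _ hS hx, hexp, rpow_add hS,
    rpow_add hS, rpow_natCast]
  ring

theorem stmt_18_general (n : ℕ) (α β : ℝ) (γ : Fin (n + 1) → ℝ) (c : Fin (n + 1) → ℕ) (M : ℕ) :
    ∀ S ∈ Set.Ioo (0:ℝ) 1, ∀ d : Fin n → ℝ, (∀ i, 0 < d i) → (∑ i, d i < 1) →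
      S ^ n *
          ((∏ j, (S * (Fin.snoc d (1 - ∑ i, d i) : Fin (n + 1) → ℝ) j) ^ ((c j : ℝ) + γ j - 1)) *
            (∑ j, S * (Fin.snoc d (1 - ∑ i, d i) : Fin (n + 1) → ℝ) j) ^ (-α - ∑ j, γ j) *
            (1 - ∑ j, S * (Fin.snoc d (1 - ∑ i, d i) : Fin (n + 1) → ℝ) j) ^
              ((M : ℝ) + β + α - (∑ j, c j : ℕ) - 1)) /
          (Real.Gamma (((∑ j, c j : ℕ) : ℝ) - α) *
              Real.Gamma ((M : ℝ) + β + α - (∑ j, c j : ℕ)) /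
              Real.Gamma ((M : ℝ) + β) *
            (∏ j, Real.Gamma ((c j : ℝ) + γ j)) /
              Real.Gamma (((∑ j, c j : ℕ) : ℝ) + ∑ j, γ j)) =
        (S ^ (((∑ j, c j : ℕ) : ℝ) - α - 1) *
            (1 - S) ^ ((M : ℝ) + β + α - (∑ j, c j : ℕ) - 1) *
            Real.Gamma ((M : ℝ) + β) /
            (Real.Gamma (((∑ j, c j : ℕ) : ℝ) - α) *
              Real.Gamma ((M : ℝ) + β + α - (∑ j, c j : ℕ)))) *
          ((Real.Gamma (((∑ j, c j : ℕ) : ℝ) + ∑ j, γ j) /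
              ∏ j, Real.Gamma ((c j : ℝ) + γ j)) *
            ∏ j, ((Fin.snoc d (1 - ∑ i, d i) : Fin (n + 1) → ℝ) j) ^ ((c j : ℝ) + γ j - 1)) := by
  intro S ⟨hS0, _⟩ d hd hsum
  set x : Fin (n + 1) → ℝ := Fin.snoc d (1 - ∑ i, d i)
  have hx : ∀ j, 0 ≤ x j := Fin.snoc_one_sub_sum_nonneg (fun i => (hd i).le) hsum.le
  have hfactor := scale_simplex_density_factorization hS0 hx (Fin.sum_snoc_one_sub_sum d)
    (fun j => (c j : ℝ) + γ j) (-α - ∑ j, γ j)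
  have hexp : ∑ j, ((c j : ℝ) + γ j) + (-α - ∑ j, γ j) - 1 = ((∑ j, c j : ℕ) : ℝ) - α - 1 := by
    push_cast
    rw [Finset.sum_add_distrib]
    ring
  have hradius : ∑ j, S * x j = S := by
    rw [← Finset.mul_sum, Fin.sum_snoc_one_sub_sum, mul_one]
  rw [hexp] at hfactor
  rw [← mul_assoc (S ^ n), hfactor, hradius]
  simp only [div_eq_mul_inv, mul_inv, inv_inv]
  ring

/-- Posterior jump vector in the stable-Beta-Dirichlet multinomial model: under the change
of variables s = S·d (Jacobian S^n, q = n+1), the normalized density, proportional to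
∏ⱼ sⱼ^{cⱼ+γⱼ-1} s_·^{-α-∑γ}(1-s_·)^{M+β+α-c-1}, factorizes into the Beta(c-α, M+β+α-c)
density in S times the Dirichlet(c₁+γ₁,…,c_q+γ_q) density in d; hence S = ∑Jⱼ is
Beta(c-α, M+β+α-c) and independent of D = J/S, which is Dirichlet(c+γ). -/
theorem stmt_18 (n : ℕ) (α β : ℝ) (γ : Fin (n + 1) → ℝ) (c : Fin (n + 1) → ℕ) (M : ℕ)
    (hα0 : 0 ≤ α) (hα1 : α < 1) (hβ : -α < β) (hγ : ∀ j, 0 < γ j)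
    (hcα : 0 < ((∑ j, c j : ℕ) : ℝ) - α)
    (hMc : 0 < (M : ℝ) + β + α - (∑ j, c j : ℕ)) :
    ∀ S ∈ Set.Ioo (0:ℝ) 1, ∀ d : Fin n → ℝ, (∀ i, 0 < d i) → (∑ i, d i < 1) →
      S ^ n *
          ((∏ j, (S * (Fin.snoc d (1 - ∑ i, d i) : Fin (n + 1) → ℝ) j) ^ ((c j : ℝ) + γ j - 1)) *
            (∑ j, S * (Fin.snoc d (1 - ∑ i, d i) : Fin (n + 1) → ℝ) j) ^ (-α - ∑ j, γ j) *
            (1 - ∑ j, S * (Fin.snoc d (1 - ∑ i, d i) : Fin (n + 1) → ℝ) j) ^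
              ((M : ℝ) + β + α - (∑ j, c j : ℕ) - 1)) /
          (Real.Gamma (((∑ j, c j : ℕ) : ℝ) - α) *
              Real.Gamma ((M : ℝ) + β + α - (∑ j, c j : ℕ)) /
              Real.Gamma ((M : ℝ) + β) *
            (∏ j, Real.Gamma ((c j : ℝ) + γ j)) /
              Real.Gamma (((∑ j, c j : ℕ) : ℝ) + ∑ j, γ j)) =
        (S ^ (((∑ j, c j : ℕ) : ℝ) - α - 1) *
            (1 - S) ^ ((M : ℝ) + β + α - (∑ j, c j : ℕ) - 1) *
            Real.Gamma ((M : ℝ) + β) /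
            (Real.Gamma (((∑ j, c j : ℕ) : ℝ) - α) *
              Real.Gamma ((M : ℝ) + β + α - (∑ j, c j : ℕ)))) *
          ((Real.Gamma (((∑ j, c j : ℕ) : ℝ) + ∑ j, γ j) /
              ∏ j, Real.Gamma ((c j : ℝ) + γ j)) *
            ∏ j, ((Fin.snoc d (1 - ∑ i, d i) : Fin (n + 1) → ℝ) j) ^ ((c j : ℝ) + γ j - 1)) :=
  stmt_18_general n α β γ c M
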